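/- If A is a maximum (n,k)-shelf and p is a prime with p ≤ n, then o_p(A) ≥ min(k, ⌊log_p n⌋); in particular, if o_p(A) < min(k, ⌊log_p n⌋), then A ∪ {p^j} is a strictly larger (n,k)-shelf for some j with p^j ≤ n and p^j ∉ A. -/

import Mathlib

/-!
If fewer than `min k ⌊log_p n⌋` elements of a shelf `A` are multiples of `p`, then one of
the `⌊log_p n⌋` distinct powers `p, p², …, p^⌊log_p n⌋ ≤ n` is missing from `A`. Adding it
keeps `A` a shelf, since a prime power is divisible by no prime other than `p`, and the count
for `p` itself was below `k`. So a maximum shelf cannot have so few multiples of `p`.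
-/

open Finset

def IsShelf (n k : ℕ) (A : Finset ℕ) : Prop :=
  A ⊆ Icc 1 n ∧ ∀ q : ℕ, q.Prime → #{a ∈ A | q ∣ a} ≤ k

lemma exists_pow_notMem_of_card_filter_dvd_lt_log {p n : ℕ} (hp : 2 ≤ p) {A : Finset ℕ}
    (hA : #{a ∈ A | p ∣ a} < Nat.log p n) : ∃ j, 1 ≤ j ∧ p ^ j ≤ n ∧ p ^ j ∉ A := by
  by_contra! hall
  have hn : n ≠ 0 := by rintro rfl; simp at hA
  have hpowers : (Icc 1 (Nat.log p n)).image (p ^ ·) ⊆ {a ∈ A | p ∣ a} := by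
    simp only [subset_iff, mem_image, mem_Icc, mem_filter]
    rintro _ ⟨j, ⟨hj1, hjlog⟩, rfl⟩
    exact ⟨hall j hj1 (Nat.pow_le_of_le_log hn hjlog), dvd_pow_self p (by omega)⟩
  have hcard := card_le_card hpowers
  rw [card_image_of_injective _ (Nat.pow_right_injective hp), Nat.card_Icc] at hcard
  omega

lemma filter_dvd_insert_prime_pow_of_ne {p q j : ℕ} (hp : p.Prime) (hq : q.Prime) (hqp : q ≠ p)
    (A : Finset ℕ) : {a ∈ insert (p ^ j) A | q ∣ a} = {a ∈ A | q ∣ a} := by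
  have hndvd : ¬ q ∣ p ^ j := fun hdvd =>
    hqp ((Nat.prime_dvd_prime_iff_eq hq hp).mp (hq.dvd_of_dvd_pow hdvd))
  rw [filter_insert, if_neg hndvd]

lemma IsShelf.insert_prime_pow {n k p j : ℕ} {A : Finset ℕ} (hA : IsShelf n k A) (hp : p.Prime)
    (hjn : p ^ j ≤ n) (hk : #{a ∈ A | p ∣ a} < k) :
    IsShelf n k (insert (p ^ j) A) := by
  refine ⟨insert_subset (mem_Icc.mpr ⟨Nat.one_le_pow _ _ hp.pos, hjn⟩) hA.1, fun q hq => ?_⟩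
  obtain rfl | hqp := eq_or_ne q p
  · calc #{a ∈ insert (q ^ j) A | q ∣ a}
        _ ≤ #{a ∈ A | q ∣ a} + 1 := by rw [filter_insert]; split_ifs <;> simp [card_insert_le]
        _ ≤ k := hk
  · rw [filter_dvd_insert_prime_pow_of_ne hp hq hqp]
    exact hA.2 q hq

theorem maximum_shelf_prime_multiplicity_general (k n : ℕ) (A : Finset ℕ)
    (hA : A ⊆ Finset.Icc 1 n)
    (hshelf : ∀ p : ℕ, p.Prime → (A.filter (fun a => p ∣ a)).card ≤ k)
    (hmax : ∀ B : Finset ℕ, B ⊆ Finset.Icc 1 n →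
      (∀ p : ℕ, p.Prime → (B.filter (fun a => p ∣ a)).card ≤ k) →
      B.card ≤ A.card)
    (p : ℕ) (hp : p.Prime) :
    min k (Nat.log p n) ≤ (A.filter (fun a => p ∣ a)).card ∧
    ((A.filter (fun a => p ∣ a)).card < min k (Nat.log p n) →
      ∃ j : ℕ, 1 ≤ j ∧ p ^ j ≤ n ∧ p ^ j ∉ A ∧
        (insert (p ^ j) A ⊆ Finset.Icc 1 n ∧
         (∀ q : ℕ, q.Prime →
           ((insert (p ^ j) A).filter (fun a => q ∣ a)).card ≤ k) ∧
         A.card < (insert (p ^ j) A).card)) := by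
  have extend : #{a ∈ A | p ∣ a} < min k (Nat.log p n) →
      ∃ j, 1 ≤ j ∧ p ^ j ≤ n ∧ p ^ j ∉ A ∧
        IsShelf n k (insert (p ^ j) A) ∧ #A < #(insert (p ^ j) A) := by
    intro hlt
    obtain ⟨j, hj, hjn, hjA⟩ :=
      exists_pow_notMem_of_card_filter_dvd_lt_log hp.two_le (hlt.trans_le (min_le_right _ _))
    have hshelf' :=
      IsShelf.insert_prime_pow ⟨hA, hshelf⟩ hp hjn (hlt.trans_le (min_le_left _ _))
    exact ⟨j, hj, hjn, hjA, hshelf', card_lt_card (ssubset_insert hjA)⟩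
  refine ⟨?_, fun hlt => ?_⟩
  · by_contra! hlt
    obtain ⟨j, -, -, -, ⟨hsub, hsub_shelf⟩, hcard⟩ := extend hlt
    exact (hmax _ hsub hsub_shelf).not_gt hcard
  · obtain ⟨j, hj, hjn, hjA, hshelf', hcard⟩ := extend hlt
    exact ⟨j, hj, hjn, hjA, hshelf'.1, hshelf'.2, hcard⟩

/-- A maximum `(n,k)`-shelf contains at least `min k ⌊log_p n⌋` multiples of each
prime `p ≤ n`; in particular otherwise some power `p^j` could be added. -/
theorem maximum_shelf_prime_multiplicity (k n : ℕ) (A : Finset ℕ)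
    (hA : A ⊆ Finset.Icc 1 n)
    (hshelf : ∀ p : ℕ, p.Prime → (A.filter (fun a => p ∣ a)).card ≤ k)
    (hmax : ∀ B : Finset ℕ, B ⊆ Finset.Icc 1 n →
      (∀ p : ℕ, p.Prime → (B.filter (fun a => p ∣ a)).card ≤ k) →
      B.card ≤ A.card)
    (p : ℕ) (hp : p.Prime) (hpn : p ≤ n) :
    min k (Nat.log p n) ≤ (A.filter (fun a => p ∣ a)).card ∧
    ((A.filter (fun a => p ∣ a)).card < min k (Nat.log p n) →
      ∃ j : ℕ, 1 ≤ j ∧ p ^ j ≤ n ∧ p ^ j ∉ A ∧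
        (insert (p ^ j) A ⊆ Finset.Icc 1 n ∧
         (∀ q : ℕ, q.Prime →
           ((insert (p ^ j) A).filter (fun a => q ∣ a)).card ≤ k) ∧
         A.card < (insert (p ^ j) A).card)) :=
  maximum_shelf_prime_multiplicity_general k n A hA hshelf hmax p hp
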